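/- Let U : ℝ² → ℝᵐ be a smooth map and C > 0 a constant such that for every Lipschitz compactly supported function ψ : ℝ² → ℝ one has ∫_{ℝ²} |DU|² ψ² dx ≤ C ∫_{ℝ²} |∇ψ|² dx. Then U is constant. (Proof via the logarithmic cutoff ψ = 1 on B₁, ψ = 1 - log r / log R on B_R \ B₁, ψ = 0 outside B_R, which gives ∫_{B₁} |DU|² dx ≤ 2πC/ log R for every R > 1, and scaling.) -/

import Mathlib

open MeasureTheory Filter Set

noncomputable section

abbrev E (n : ℕ) : Type := EuclideanSpace ℝ (Fin n)

def es {n : ℕ} (i : Fin n) : E n := EuclideanSpace.single i 1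

def pd {n : ℕ} (i : Fin n) (f : E n → ℝ) (x : E n) : ℝ := fderiv ℝ f x (es i)

def cutoff (z₀ : E 2) (r : ℝ) (N : ℕ) (x : E 2) : ℝ :=
  max 0 ((Real.log (r * 2 ^ N) - Real.log (max r ‖x - z₀‖)) / (N * Real.log 2))

lemma lipschitz_log_max {r : ℝ} (hr : 0 < r) :
    LipschitzWith (Real.toNNReal r⁻¹) (fun t : ℝ => Real.log (max r t)) := by
  have key : ∀ a b : ℝ,
      Real.log (max r a) - Real.log (max r b) ≤ r⁻¹ * |a - b| := by
    intro a b
    rcases le_total a b with hba | hba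
    · have hmono : Real.log (max r a) ≤ Real.log (max r b) :=
        Real.log_le_log (lt_of_lt_of_le hr (le_max_left _ _)) (max_le_max le_rfl hba)
      have : (0:ℝ) ≤ r⁻¹ * |a - b| := by positivity
      linarith
    · set a' := max r a with ha'
      set b' := max r b with hb''
      have hb' : r ≤ b' := le_max_left _ _
      have hb'0 : 0 < b' := lt_of_lt_of_le hr hb'
      have ha'b' : b' ≤ a' := max_le_max le_rfl hba
      have h1 : Real.log a' - Real.log b' = Real.log (a' / b') := by
        rw [Real.log_div (by positivity) (by positivity)]
      have h2 : Real.log (a' / b') ≤ a' / b' - 1 :=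
        Real.log_le_sub_one_of_pos (by positivity)
      have h3 : a' / b' - 1 = (a' - b') / b' := by field_simp
      have h4 : (a' - b') / b' ≤ (a' - b') / r :=
        div_le_div_of_nonneg_left (by linarith) hr hb'
      have h5 : a' - b' ≤ |a - b| := by
        have := abs_max_sub_max_le_abs a b r
        rw [max_comm a r, max_comm b r] at this
        calc a' - b' ≤ |a' - b'| := le_abs_self _
          _ ≤ |a - b| := this
      have h6 : (a' - b') / r ≤ |a - b| / r := by gcongr
      calc Real.log a' - Real.log b' ≤ (a' - b') / r := by rw [h1]; linarith
        _ ≤ |a - b| / r := h6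
        _ = r⁻¹ * |a - b| := by ring
  apply LipschitzWith.of_dist_le_mul
  intro a b
  rw [Real.dist_eq, Real.dist_eq, Real.coe_toNNReal _ (by positivity), abs_sub_le_iff]
  constructor
  · exact key a b
  · rw [abs_sub_comm]; exact key b a

/-- Dyadic decomposition of an interval `[r, r 2^N]`. -/

lemma dyadic_mem {r t : ℝ} : ∀ N : ℕ, 1 ≤ N → r ≤ t → t ≤ r * 2 ^ N →
    ∃ k, k < N ∧ r * 2 ^ k ≤ t ∧ t ≤ r * 2 ^ (k + 1) := by
  intro N
  induction N with
  | zero => intro h; omega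
  | succ n ih =>
    intro _ h1 h2
    rcases Nat.eq_zero_or_pos n with hn | hn
    · subst hn
      exact ⟨0, by omega, by simpa using h1, by simpa using h2⟩
    · rcases le_total t (r * 2 ^ n) with ht | ht
      · obtain ⟨k, hk, hk1, hk2⟩ := ih (by omega) h1 ht
        exact ⟨k, by omega, hk1, hk2⟩
      · exact ⟨n, by omega, ht, h2⟩

lemma cutoff_lipschitz {z₀ : E 2} {r : ℝ} {N : ℕ} (hr : 0 < r) (hN : 1 ≤ N) :
    ∃ K : NNReal, LipschitzWith K (cutoff z₀ r N) := by
  set L : ℝ := N * Real.log 2 with hL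
  have hL0 : 0 < L := by
    have := Real.log_pos (by norm_num : (1:ℝ) < 2)
    have : (0:ℝ) < N := by exact_mod_cast hN
    positivity
  have h1 : LipschitzWith 1 (fun x : E 2 => ‖x - z₀‖) := by
    apply LipschitzWith.of_dist_le_mul
    intro a b
    rw [Real.dist_eq, NNReal.coe_one, one_mul, dist_eq_norm]
    exact abs_norm_sub_norm_le _ _ |>.trans (by rw [sub_sub_sub_cancel_right])
  have h2 := (lipschitz_log_max hr).comp h1
  have h3 : LipschitzWith (Real.toNNReal L⁻¹)
      (fun t : ℝ => (Real.log (r * 2 ^ N) - t) / L) := by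
    apply LipschitzWith.of_dist_le_mul
    intro a b
    rw [Real.dist_eq, Real.dist_eq, Real.coe_toNNReal _ (by positivity)]
    have : (Real.log (r * 2 ^ N) - a) / L - (Real.log (r * 2 ^ N) - b) / L
        = (b - a) / L := by ring
    rw [this, abs_div, abs_of_pos hL0, abs_sub_comm, div_eq_inv_mul]
  have h4 := (h3.comp h2).const_max 0
  exact ⟨_, h4⟩
lemma cutoff_eq_one {z₀ : E 2} {r : ℝ} {N : ℕ} (hr : 0 < r) (hN : 1 ≤ N)
    {x : E 2} (hx : ‖x - z₀‖ ≤ r) : cutoff z₀ r N x = 1 := by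
  have hmax : max r ‖x - z₀‖ = r := max_eq_left hx
  have hlog : Real.log (r * 2 ^ N) = Real.log r + N * Real.log 2 := by
    rw [Real.log_mul (ne_of_gt hr) (by positivity), Real.log_pow]
  have hL0 : 0 < (N : ℝ) * Real.log 2 := by
    have := Real.log_pos (by norm_num : (1:ℝ) < 2)
    have : (0:ℝ) < N := by exact_mod_cast hN
    positivity
  unfold cutoff
  rw [hmax, hlog]
  rw [show Real.log r + ↑N * Real.log 2 - Real.log r = (N:ℝ) * Real.log 2 by ring,
    div_self (ne_of_gt hL0)]
  norm_num
lemma cutoff_eq_zero {z₀ : E 2} {r : ℝ} {N : ℕ} (hr : 0 < r)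
    {x : E 2} (hx : r * 2 ^ N ≤ ‖x - z₀‖) : cutoff z₀ r N x = 0 := by
  have hR : 0 < r * 2 ^ N := by positivity
  have hmax : max r ‖x - z₀‖ = ‖x - z₀‖ :=
    max_eq_right (le_trans (by nlinarith [one_le_pow₀ (by norm_num : (1:ℝ) ≤ 2) (n := N)]) hx)
  unfold cutoff
  rw [hmax]
  apply max_eq_left
  apply div_nonpos_of_nonpos_of_nonneg
  · have := Real.log_le_log hR hx
    linarith
  · have := Real.log_nonneg (by norm_num : (1:ℝ) ≤ 2)
    positivity
lemma cutoff_fderiv_inner {z₀ : E 2} {r : ℝ} {N : ℕ} (hr : 0 < r) (hN : 1 ≤ N)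
    {x : E 2} (hx : ‖x - z₀‖ < r) : fderiv ℝ (cutoff z₀ r N) x = 0 := by
  have hopen : IsOpen {y : E 2 | ‖y - z₀‖ < r} :=
    isOpen_lt (Continuous.norm (by continuity)) continuous_const
  have hev : cutoff z₀ r N =ᶠ[nhds x] fun _ => 1 := by
    filter_upwards [hopen.mem_nhds hx] with y hy
    exact cutoff_eq_one hr hN (le_of_lt hy)
  rw [hev.fderiv_eq, fderiv_const_apply]
lemma cutoff_fderiv_outer {z₀ : E 2} {r : ℝ} {N : ℕ} (hr : 0 < r)
    {x : E 2} (hx : r * 2 ^ N < ‖x - z₀‖) : fderiv ℝ (cutoff z₀ r N) x = 0 := by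
  have hopen : IsOpen {y : E 2 | r * 2 ^ N < ‖y - z₀‖} :=
    isOpen_lt continuous_const (Continuous.norm (by continuity))
  have hev : cutoff z₀ r N =ᶠ[nhds x] fun _ => 0 := by
    filter_upwards [hopen.mem_nhds hx] with y hy
    exact cutoff_eq_zero hr (le_of_lt hy)
  rw [hev.fderiv_eq, fderiv_const_apply]
lemma cutoff_fderiv_annulus {z₀ : E 2} {r : ℝ} {N : ℕ} (hr : 0 < r) (hN : 1 ≤ N)
    {x : E 2} (h1 : r < ‖x - z₀‖) (h2 : ‖x - z₀‖ < r * 2 ^ N) :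
    ‖fderiv ℝ (cutoff z₀ r N) x‖ ≤ (‖x - z₀‖ * ((N : ℝ) * Real.log 2))⁻¹ := by
  set R : ℝ := r * 2 ^ N with hR
  set L : ℝ := (N : ℝ) * Real.log 2 with hL
  have hlog2 : 0 < Real.log 2 := Real.log_pos (by norm_num)
  have hN0 : (0:ℝ) < N := by exact_mod_cast hN
  have hL0 : 0 < L := by positivity
  set t : ℝ := ‖x - z₀‖ with htdef
  have ht0 : 0 < t := lt_trans hr h1
  have hopen : IsOpen {y : E 2 | r < ‖y - z₀‖ ∧ ‖y - z₀‖ < R} := by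
    apply IsOpen.inter
    · exact isOpen_lt continuous_const (Continuous.norm (by continuity))
    · exact isOpen_lt (Continuous.norm (by continuity)) continuous_const
  have hev : cutoff z₀ r N =ᶠ[nhds x]
      fun y => (Real.log R - Real.log ‖y - z₀‖) / L := by
    filter_upwards [hopen.mem_nhds ⟨h1, h2⟩] with y hy
    unfold cutoff
    rw [max_eq_right (le_of_lt hy.1)]
    apply max_eq_right
    apply div_nonneg _ hL0.le
    have := Real.log_le_log (lt_trans hr hy.1) hy.2.le
    linarith
  have hxz : x - z₀ ≠ 0 := by
    intro h
    rw [htdef, h, norm_zero] at ht0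
    exact lt_irrefl 0 ht0
  have hsub : HasFDerivAt (fun y : E 2 => y - z₀) (ContinuousLinearMap.id ℝ (E 2)) x := by
    simpa using (hasFDerivAt_id x).sub_const z₀
  have hd : DifferentiableAt ℝ (fun z : E 2 => ‖z‖) (x - z₀) :=
    (contDiffAt_norm (n := 1) ℝ hxz).differentiableAt one_ne_zero
  set ν : E 2 →L[ℝ] ℝ := fderiv ℝ (fun z : E 2 => ‖z‖) (x - z₀) with hν
  have hνd : HasFDerivAt (fun z : E 2 => ‖z‖) ν (x - z₀) := hd.hasFDerivAt
  have hn : HasFDerivAt (fun y : E 2 => ‖y - z₀‖) ν x := by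
    have := hνd.comp x hsub
    exact this
  have hνle : ‖ν‖ ≤ 1 := by
    have := hνd.le_of_lipschitz lipschitzWith_one_norm
    simpa using this
  have hG : HasDerivAt (fun s : ℝ => (Real.log R - Real.log s) / L) (-t⁻¹ / L) t :=
    ((Real.hasDerivAt_log (ne_of_gt ht0)).const_sub (Real.log R)).div_const L
  have hcomp : HasFDerivAt (fun y : E 2 => (Real.log R - Real.log ‖y - z₀‖) / L)
      ((-t⁻¹ / L) • ν) x := by have := hG.comp_hasFDerivAt x hn; exact this
  rw [hev.fderiv_eq, hcomp.fderiv]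
  rw [norm_smul, Real.norm_eq_abs]
  have habs : |(-t⁻¹ / L)| = t⁻¹ / L := by
    rw [abs_div, abs_neg, abs_of_pos (inv_pos.mpr ht0), abs_of_pos hL0]
  rw [habs]
  calc t⁻¹ / L * ‖ν‖ ≤ t⁻¹ / L * 1 := by
        apply mul_le_mul_of_nonneg_left hνle (by positivity)
    _ = (t * L)⁻¹ := by rw [mul_one, mul_inv, div_eq_mul_inv]

lemma sum_sq_le {D : E 2 →L[ℝ] ℝ} : (∑ i, (D (es i)) ^ 2) ≤ 2 * ‖D‖ ^ 2 := by
  have h : ∀ i : Fin 2, (D (es i)) ^ 2 ≤ ‖D‖ ^ 2 := by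
    intro i
    have h1 : ‖D (es i)‖ ≤ ‖D‖ * ‖es i‖ := D.le_opNorm _
    have h2 : ‖es i‖ = 1 := by
      rw [show es i = EuclideanSpace.single i (1:ℝ) from rfl, EuclideanSpace.norm_single]
      norm_num
    rw [h2, mul_one] at h1
    calc (D (es i)) ^ 2 = ‖D (es i)‖ ^ 2 := by rw [Real.norm_eq_abs, sq_abs]
      _ ≤ ‖D‖ ^ 2 := by apply pow_le_pow_left₀ (norm_nonneg _) h1
  rw [Fin.sum_univ_two]
  linarith [h 0, h 1]

theorem liouville_from_caccioppoli (m : ℕ)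
    (U : E 2 → E m) (C : ℝ) (hC : 0 < C)
    (hU : ContDiff ℝ (⊤ : ℕ∞) U)
    (hcacc : ∀ (ψ : E 2 → ℝ) (K : NNReal), LipschitzWith K ψ → HasCompactSupport ψ →
      (∫ x : E 2, (∑ α, ∑ i, (pd i (fun z => U z α) x) ^ 2) * ψ x ^ 2) ≤
        C * ∫ x : E 2, ∑ i, (fderiv ℝ ψ x (es i)) ^ 2) :
    ∀ x y : E 2, U x = U y := by
  classical
  have hUα : ∀ α : Fin m, ContDiff ℝ (⊤ : ℕ∞) (fun z => U z α) := by
    intro α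
    exact ((EuclideanSpace.proj α : EuclideanSpace ℝ (Fin m) →L[ℝ] ℝ).contDiff).comp hU
  set F : E 2 → ℝ := fun x => ∑ α, ∑ i, (pd i (fun z => U z α) x) ^ 2 with hFdef
  have hFnonneg : ∀ x, 0 ≤ F x := fun x =>
    Finset.sum_nonneg fun α _ => Finset.sum_nonneg fun i _ => sq_nonneg _
  have hFcont : Continuous F := by
    apply continuous_finset_sum _ fun α _ => continuous_finset_sum _ fun i _ => ?_
    have h1 : Continuous fun x => fderiv ℝ (fun z => U z α) x :=
      (hUα α).continuous_fderiv (by simp)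
    exact (h1.clm_apply continuous_const).pow 2
  have key : ∀ z, F z = 0 := by
    by_contra hcon
    push_neg at hcon
    obtain ⟨z₀, hz₀⟩ := hcon
    have hFpos : 0 < F z₀ := lt_of_le_of_ne (hFnonneg z₀) (Ne.symm hz₀)
    set δ : ℝ := F z₀ / 2 with hδ
    have hδpos : 0 < δ := by positivity
    obtain ⟨ε, hε, hball⟩ : ∃ ε > 0, Metric.ball z₀ ε ⊆ {x | δ < F x} := by
      have hopen : IsOpen {x | δ < F x} := isOpen_lt continuous_const hFcont
      rcases Metric.isOpen_iff.mp hopen z₀ (by simp only [Set.mem_setOf_eq, hδ]; linarith) with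
        ⟨ε, hε, h⟩
      exact ⟨ε, hε, h⟩
    set r : ℝ := ε / 2 with hrdef
    have hr : 0 < r := by positivity
    have hrb : ∀ x ∈ Metric.closedBall z₀ r, δ ≤ F x := by
      intro x hx
      apply le_of_lt
      apply hball
      rw [Metric.mem_closedBall] at hx
      rw [Metric.mem_ball]
      rw [hrdef] at hx
      linarith
    set Vb : ℝ := (volume (Metric.ball (0 : E 2) 1)).toReal with hVbdef
    have hVbpos : 0 < Vb := by
      rw [hVbdef]
      exact ENNReal.toReal_pos (Metric.measure_ball_pos volume _ one_pos).ne' measure_ball_lt_top.ne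
    set vr : ℝ := (volume (Metric.closedBall z₀ r)).toReal with hvrdef
    have hvrpos : 0 < vr := by
      rw [hvrdef]
      exact ENNReal.toReal_pos (Metric.measure_closedBall_pos volume z₀ hr).ne'
        measure_closedBall_lt_top.ne
    have hlog2 : 0 < Real.log 2 := Real.log_pos (by norm_num)
    have main : ∀ N : ℕ, 1 ≤ N →
        δ * vr ≤ C * (8 * Vb * N / ((N : ℝ) * Real.log 2) ^ 2) := by
      intro N hN
      have hNR : (0:ℝ) < N := by exact_mod_cast hN
      set R : ℝ := r * 2 ^ N with hRdef
      set L : ℝ := (N : ℝ) * Real.log 2 with hLdef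
      have hL0 : 0 < L := by positivity
      set ψ : E 2 → ℝ := cutoff z₀ r N with hψdef
      obtain ⟨K, hK⟩ := cutoff_lipschitz (z₀ := z₀) hr hN
      have hsupp : HasCompactSupport ψ := by
        apply HasCompactSupport.intro (isCompact_closedBall z₀ R)
        intro x hx
        apply cutoff_eq_zero hr
        rw [Metric.mem_closedBall, not_le, dist_eq_norm] at hx
        exact hx.le
      have hψcont : Continuous ψ := hK.continuous
      have hFψint : Integrable (fun x => F x * ψ x ^ 2) := by
        apply Continuous.integrable_of_hasCompactSupport
        · exact hFcont.mul (hψcont.pow 2)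
        · have heq : (fun x => F x * ψ x ^ 2) = fun x => (F x * ψ x) * ψ x := by
            funext x; ring
          rw [heq]
          exact hsupp.mul_left
      have hlhs : δ * vr ≤ ∫ x, F x * ψ x ^ 2 := by
        have hind : Integrable ((Metric.closedBall z₀ r).indicator fun _ => δ) := by
          rw [integrable_indicator_iff measurableSet_closedBall]
          exact integrableOn_const measure_closedBall_lt_top.ne
        have hle : ∀ x, (Metric.closedBall z₀ r).indicator (fun _ => δ) x ≤ F x * ψ x ^ 2 := by
          intro x
          by_cases hx : x ∈ Metric.closedBall z₀ r
          · rw [Set.indicator_of_mem hx]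
            have h1 : ψ x = 1 := cutoff_eq_one hr hN
              (by rwa [Metric.mem_closedBall, dist_eq_norm] at hx)
            rw [h1]
            simpa using hrb x hx
          · rw [Set.indicator_of_notMem hx]
            exact mul_nonneg (hFnonneg x) (sq_nonneg _)
        calc δ * vr = ∫ x, (Metric.closedBall z₀ r).indicator (fun _ => δ) x := by
              rw [integral_indicator_const δ measurableSet_closedBall, smul_eq_mul, hvrdef]
              simp [measureReal_def, mul_comm]
          _ ≤ _ := integral_mono hind hFψint hle
      have hcac : (∫ x, F x * ψ x ^ 2) ≤ C * ∫ x : E 2, ∑ i, (fderiv ℝ ψ x (es i)) ^ 2 := by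
        simp only [hFdef]
        exact hcacc ψ K hK hsupp
      have hrhs : (∫ x : E 2, ∑ i, (fderiv ℝ ψ x (es i)) ^ 2) ≤ 8 * Vb * N / L ^ 2 := by
        set H : E 2 → ℝ := fun x => ∑ k ∈ Finset.range N,
          (Metric.closedBall z₀ (r * 2 ^ (k + 1))).indicator
            (fun _ => 2 / L ^ 2 * ((r * 2 ^ k) ^ 2)⁻¹) x with hHdef
        have hHterm_nn : ∀ (x : E 2) (k : ℕ),
            0 ≤ (Metric.closedBall z₀ (r * 2 ^ (k + 1))).indicator
              (fun _ => 2 / L ^ 2 * ((r * 2 ^ k) ^ 2)⁻¹) x := by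
          intro x k
          apply Set.indicator_nonneg
          intro _ _
          positivity
        have hHint : Integrable H := by
          apply integrable_finset_sum
          intro k _
          rw [integrable_indicator_iff measurableSet_closedBall]
          exact integrableOn_const measure_closedBall_lt_top.ne
        have hsph : volume (Metric.sphere z₀ r ∪ Metric.sphere z₀ R) = 0 := by
          apply le_antisymm _ (by simp)
          refine le_trans (measure_union_le _ _) ?_
          rw [Measure.addHaar_sphere, Measure.addHaar_sphere]
          simp
        have hgH : ∀ᵐ x : E 2, (∑ i, (fderiv ℝ ψ x (es i)) ^ 2) ≤ H x := by
          filter_upwards [(compl_mem_ae_iff.mpr hsph :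
            (Metric.sphere z₀ r ∪ Metric.sphere z₀ R)ᶜ ∈ ae volume)] with x hx
          rw [Set.mem_compl_iff, Set.mem_union, not_or] at hx
          obtain ⟨hx1, hx2⟩ := hx
          rw [Metric.mem_sphere, dist_eq_norm] at hx1 hx2
          have hHnn : 0 ≤ H x := Finset.sum_nonneg fun k _ => hHterm_nn x k
          rcases lt_trichotomy ‖x - z₀‖ r with h | h | h
          · rw [show ψ = cutoff z₀ r N from hψdef, cutoff_fderiv_inner hr hN h]
            simpa using hHnn
          · exact absurd h hx1
          · rcases lt_trichotomy ‖x - z₀‖ R with h' | h' | h'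
            · -- annulus case
              obtain ⟨k, hk, hk1, hk2⟩ := dyadic_mem N hN h.le (le_of_lt h')
              have hDle := cutoff_fderiv_annulus (z₀ := z₀) hr hN h h'
              rw [← hψdef, ← hLdef] at hDle
              have ht0 : 0 < ‖x - z₀‖ := lt_trans hr h
              have hstep1 : (∑ i, (fderiv ℝ ψ x (es i)) ^ 2) ≤
                  2 * ((‖x - z₀‖ * L)⁻¹) ^ 2 := by
                refine le_trans sum_sq_le ?_
                have := pow_le_pow_left₀ (norm_nonneg _) hDle 2
                linarith
              have hstep2 : 2 * ((‖x - z₀‖ * L)⁻¹) ^ 2 ≤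
                  2 / L ^ 2 * ((r * 2 ^ k) ^ 2)⁻¹ := by
                have hrk : (0:ℝ) < r * 2 ^ k := by positivity
                have hsq : (r * 2 ^ k) ^ 2 ≤ ‖x - z₀‖ ^ 2 :=
                  pow_le_pow_left₀ hrk.le hk1 2
                have hinv : (‖x - z₀‖ ^ 2)⁻¹ ≤ ((r * 2 ^ k) ^ 2)⁻¹ := by
                  apply inv_anti₀ (by positivity) hsq
                have heq2 : 2 * ((‖x - z₀‖ * L)⁻¹) ^ 2
                    = 2 / L ^ 2 * (‖x - z₀‖ ^ 2)⁻¹ := by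
                  field_simp
                rw [heq2]
                apply mul_le_mul_of_nonneg_left hinv (by positivity)
              have hmem : x ∈ Metric.closedBall z₀ (r * 2 ^ (k + 1)) := by
                rw [Metric.mem_closedBall, dist_eq_norm]
                exact hk2
              have hHx : 2 / L ^ 2 * ((r * 2 ^ k) ^ 2)⁻¹ ≤ H x := by
                have h1 : (Metric.closedBall z₀ (r * 2 ^ (k + 1))).indicator
                    (fun _ => 2 / L ^ 2 * ((r * 2 ^ k) ^ 2)⁻¹) x
                    ≤ ∑ j ∈ Finset.range N, (Metric.closedBall z₀ (r * 2 ^ (j + 1))).indicator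
                      (fun _ => 2 / L ^ 2 * ((r * 2 ^ j) ^ 2)⁻¹) x :=
                  Finset.single_le_sum (f := fun j => (Metric.closedBall z₀ (r * 2 ^ (j + 1))).indicator
                      (fun _ => 2 / L ^ 2 * ((r * 2 ^ j) ^ 2)⁻¹) x)
                    (fun j _ => hHterm_nn x j) (Finset.mem_range.mpr hk)
                rw [Set.indicator_of_mem hmem] at h1
                exact h1
              linarith
            · exact absurd h' hx2
            · rw [show ψ = cutoff z₀ r N from hψdef, cutoff_fderiv_outer hr h']
              simpa using hHnn
        have hgnn : (0 : E 2 → ℝ) ≤ᵐ[volume] fun x => ∑ i, (fderiv ℝ ψ x (es i)) ^ 2 :=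
          Eventually.of_forall fun x => Finset.sum_nonneg fun i _ => sq_nonneg _
        have hint_le := integral_mono_of_nonneg hgnn hHint hgH
        refine le_trans hint_le ?_
        have hterm : ∀ k ∈ Finset.range N,
            (∫ x : E 2, (Metric.closedBall z₀ (r * 2 ^ (k + 1))).indicator
              (fun _ => 2 / L ^ 2 * ((r * 2 ^ k) ^ 2)⁻¹) x) = 8 * Vb / L ^ 2 := by
          intro k _
          rw [show (∫ x : E 2, (Metric.closedBall z₀ (r * 2 ^ (k + 1))).indicator
              (fun _ => 2 / L ^ 2 * ((r * 2 ^ k) ^ 2)⁻¹) x)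
              = (volume (Metric.closedBall z₀ (r * 2 ^ (k + 1)))).toReal
                • (2 / L ^ 2 * ((r * 2 ^ k) ^ 2)⁻¹) from
            integral_indicator_const _ measurableSet_closedBall, smul_eq_mul]
          have hvol : volume (Metric.closedBall z₀ (r * 2 ^ (k + 1)))
              = ENNReal.ofReal ((r * 2 ^ (k + 1)) ^ 2) * volume (Metric.ball (0 : E 2) 1) := by
            rw [Measure.addHaar_closedBall volume z₀ (by positivity)]
            congr 2
            rw [finrank_euclideanSpace_fin]
          rw [hvol, ENNReal.toReal_mul, ENNReal.toReal_ofReal (by positivity), ← hVbdef]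
          have hrk : (0:ℝ) < r * 2 ^ k := by positivity
          have hL0' : L ≠ 0 := ne_of_gt hL0
          field_simp
          ring
        rw [MeasureTheory.integral_finset_sum _ (fun k _ => by
          rw [integrable_indicator_iff measurableSet_closedBall]
          exact integrableOn_const measure_closedBall_lt_top.ne)]
        rw [Finset.sum_congr rfl hterm, Finset.sum_const, Finset.card_range, nsmul_eq_mul]
        rw [show (N : ℝ) * (8 * Vb / L ^ 2) = 8 * Vb * N / L ^ 2 by ring]
      calc δ * vr ≤ ∫ x, F x * ψ x ^ 2 := hlhs
        _ ≤ C * ∫ x : E 2, ∑ i, (fderiv ℝ ψ x (es i)) ^ 2 := hcac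
        _ ≤ C * (8 * Vb * N / L ^ 2) := by
            apply mul_le_mul_of_nonneg_left hrhs hC.le
    obtain ⟨N, hNgt⟩ := exists_nat_gt (max 1 (8 * C * Vb / (δ * vr * (Real.log 2) ^ 2)))
    have hN1 : 1 ≤ N := by
      have := lt_of_le_of_lt (le_max_left 1 _) hNgt
      exact_mod_cast this.le
    have hNval := main N hN1
    have hNR : (0:ℝ) < N := by exact_mod_cast hN1
    have hNgt2 : 8 * C * Vb / (δ * vr * (Real.log 2) ^ 2) < N :=
      lt_of_le_of_lt (le_max_right _ _) hNgt
    have heq : C * (8 * Vb * N / ((N : ℝ) * Real.log 2) ^ 2)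
        = 8 * C * Vb / ((N : ℝ) * (Real.log 2) ^ 2) := by
      field_simp
    rw [heq] at hNval
    have hlt : 8 * C * Vb / ((N : ℝ) * (Real.log 2) ^ 2) < δ * vr := by
      rw [div_lt_iff₀ (by positivity)]
      rw [div_lt_iff₀ (by positivity)] at hNgt2
      nlinarith
    linarith
  intro x y
  have hconst : ∀ α : Fin m, U x α = U y α := by
    intro α
    apply is_const_of_fderiv_eq_zero ((hUα α).differentiable (by simp))
    intro z
    have h0 : ∀ i, fderiv ℝ (fun w => U w α) z (es i) = 0 := by
      intro i
      have hz := key z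
      rw [hFdef] at hz
      have h1 := (Finset.sum_eq_zero_iff_of_nonneg
        (fun β _ => Finset.sum_nonneg fun j _ => sq_nonneg _)).mp hz α (Finset.mem_univ α)
      have h2 := (Finset.sum_eq_zero_iff_of_nonneg
        (fun j _ => sq_nonneg _)).mp h1 i (Finset.mem_univ i)
      exact pow_eq_zero_iff (two_ne_zero) |>.mp h2
    apply ContinuousLinearMap.coe_injective
    apply Module.Basis.ext (EuclideanSpace.basisFun (Fin 2) ℝ).toBasis
    intro i
    rw [OrthonormalBasis.coe_toBasis]
    simp only [EuclideanSpace.basisFun_apply]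
    simpa [es] using h0 i
  ext α
  exact hconst α
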